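/- arXiv:1003.2179 — 5 statements merged into one kernel-verified Lean document; each statement's English description precedes it below -/
import Mathlib

section
/- Let λ₁(u), λ₂(u) ∈ 1 + u⁻¹ℂ[[u⁻¹]]. Then λ₁(u) → λ₂(u) if and only if there exists γ(u) ∈ 1 + u⁻¹ℂ[[u⁻¹]] and complex numbers a₁,…,a_k, b₁,…,b_k with a_i − b_i ∈ ℤ_{≥0} for all i, such that γ(u)λ₁(u) = (1+a₁u⁻¹)⋯(1+a_ku⁻¹) and γ(u)λ₂(u) = (1+b₁u⁻¹)⋯(1+b_ku⁻¹). -/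
open PowerSeries Polynomial

noncomputable section

abbrev PS := PowerSeries ℂ

/-- `f ∈ 1 + u⁻¹ℂ[[u⁻¹]]`, with `X` playing the role of `u⁻¹`. -/
def One1 (f : PS) : Prop := PowerSeries.constantCoeff f = 1

/-- `f ∈ 1 + u⁻²ℂ[[u⁻²]]`: an even power series with constant term 1. -/
def EvenOne (f : PS) : Prop := One1 f ∧ ∀ n, Odd n → PowerSeries.coeff n f = 0

/-- `u^{-deg P}·P(u)` viewed as a power series in `X = u⁻¹`. -/
def lowerP (P : Polynomial ℂ) : PS := (P.reverse : PowerSeries ℂ)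

/-- `f → g`: there is a monic `P` with `f/g = P(u+1)/P(u)`. -/
def Arrow (f g : PS) : Prop :=
  ∃ P : Polynomial ℂ, P.Monic ∧ f * lowerP P = g * lowerP (P.comp (Polynomial.X + 1))

/-- `f ⇒ g`: there is a monic `P` of even degree with `P(u) = P(1−u)` and
`f/g = P(u+1)/P(u)`. -/
def DArrow (f g : PS) : Prop :=
  ∃ P : Polynomial ℂ, P.Monic ∧ Even P.natDegree ∧ P.comp (1 - Polynomial.X) = P ∧
    f * lowerP P = g * lowerP (P.comp (Polynomial.X + 1))

/-- `f(−u)`, i.e. `u⁻¹ ↦ −u⁻¹`. -/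
def negU (f : PS) : PS := PowerSeries.rescale (-1) f

/-- the factor `1 + a·u⁻¹`. -/
def linF (a : ℂ) : PS := 1 + PowerSeries.C a * PowerSeries.X

/-- `f` is a polynomial in `u⁻¹`. -/
def IsPolyPS (f : PS) : Prop := ∃ Q : Polynomial ℂ, (Q : PS) = f

/-- `z ∈ ℤ_{≥0}` (so `a ≥ b` iff `IsNonnegInt (a - b)`). -/
def IsNonnegInt (z : ℂ) : Prop := ∃ n : ℕ, z = n

/-! Over ℂ a monic `P` splits as `∏ (u - rᵢ)`, so `λ₁/λ₂ = P(u+1)/P(u)` is the quotient of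
`∏ (1 + (1 - rᵢ)u⁻¹)` by `∏ (1 - rᵢu⁻¹)`, and `γ = u^{-k}P(u+1)/λ₁` does it with `aᵢ - bᵢ = 1`.
Conversely, `→` is multiplicative and unchanged when both sides are multiplied by the same `γ`, and
`1 + (b+n)u⁻¹ → 1 + bu⁻¹` is witnessed by `P(u) = (u+b)(u+b+1)⋯(u+b+n-1)`, whose shift quotient
telescopes. -/

theorem Polynomial.Monic.exists_eq_prod_range_X_sub_C {K : Type*} [Field K] [IsAlgClosed K]
    {P : K[X]} (hP : P.Monic) :
    ∃ (k : ℕ) (r : ℕ → K), P = ∏ i ∈ Finset.range k, (X - C (r i)) := by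
  refine ⟨P.roots.toList.length, fun i => P.roots.toList.getD i 0, ?_⟩
  conv_lhs => rw [(IsAlgClosed.splits P).eq_prod_roots_of_monic hP,
    ← Multiset.coe_toList P.roots]
  rw [Multiset.map_coe, Multiset.prod_coe, Finset.prod_range, ← Fin.prod_univ_fun_getElem]
  exact Finset.prod_congr rfl fun i _ => by simp only [List.getD_eq_getElem _ _ i.isLt]

theorem Polynomial.prod_X_add_C_comp_X_add_one {R ι : Type*} [CommRing R] (s : Finset ι)
    (c : ι → R) : (∏ i ∈ s, (X + C (c i))).comp (X + 1) = ∏ i ∈ s, (X + C (c i + 1)) := by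
  simp only [Polynomial.prod_comp, add_comp, X_comp, C_comp, C_add, C_1]
  exact Finset.prod_congr rfl fun _ _ => by ring

def lowerPHom : ℂ[X] →* PS where
  toFun := lowerP
  map_one' := by simpa [lowerP] using reverse_C (1 : ℂ)
  map_mul' p q := by simp [lowerP, reverse_mul_of_domain]

theorem lowerP_mul (p q : ℂ[X]) : lowerP (p * q) = lowerP p * lowerP q :=
  map_mul lowerPHom p q

theorem lowerP_prod {ι : Type*} (s : Finset ι) (f : ι → ℂ[X]) :
    lowerP (∏ i ∈ s, f i) = ∏ i ∈ s, lowerP (f i) :=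
  map_prod lowerPHom f s

theorem lowerP_X_add_C (c : ℂ) : lowerP (Polynomial.X + Polynomial.C c) = linF c := by
  have hX : (Polynomial.X : ℂ[X]).reverse = 1 := by
    simpa using (reverse_mul_X (1 : ℂ[X])).trans (reverse_C 1)
  simp [lowerP, linF, hX]

theorem lowerP_prod_X_add_C {ι : Type*} (s : Finset ι) (c : ι → ℂ) :
    lowerP (∏ i ∈ s, (Polynomial.X + Polynomial.C (c i))) = ∏ i ∈ s, linF (c i) := by
  simp only [lowerP_prod, lowerP_X_add_C]

theorem arrow_one : Arrow 1 1 := ⟨1, monic_one, by simp⟩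

theorem Arrow.mul {f g f' g' : PS} (h : Arrow f g) (h' : Arrow f' g') :
    Arrow (f * f') (g * g') := by
  obtain ⟨P, hP, hfg⟩ := h
  obtain ⟨Q, hQ, hfg'⟩ := h'
  refine ⟨P * Q, hP.mul hQ, ?_⟩
  rw [mul_comp, lowerP_mul, lowerP_mul]
  linear_combination (f' * lowerP Q) * hfg + (g * lowerP (P.comp (Polynomial.X + 1))) * hfg'

theorem Arrow.prod {ι : Type*} {s : Finset ι} {f g : ι → PS} (h : ∀ i ∈ s, Arrow (f i) (g i)) :
    Arrow (∏ i ∈ s, f i) (∏ i ∈ s, g i) := by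
  classical
  induction s using Finset.induction_on with
  | empty => simpa using arrow_one
  | insert a s ha ih =>
    rw [Finset.prod_insert ha, Finset.prod_insert ha]
    exact (h a (Finset.mem_insert_self a s)).mul
      (ih fun i hi => h i (Finset.mem_insert_of_mem hi))

theorem Arrow.of_mul_left {γ f g : PS} (hγ : γ ≠ 0) (h : Arrow (γ * f) (γ * g)) : Arrow f g := by
  obtain ⟨P, hP, hfg⟩ := h
  exact ⟨P, hP, mul_left_cancel₀ hγ (by simpa only [mul_assoc] using hfg)⟩

theorem arrow_linF_add_natCast (b : ℂ) (n : ℕ) : Arrow (linF (b + n)) (linF b) := by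
  refine ⟨∏ j ∈ Finset.range n, (Polynomial.X + Polynomial.C (b + j)),
    monic_prod_of_monic _ _ fun j _ => monic_X_add_C _, ?_⟩
  rw [prod_X_add_C_comp_X_add_one, lowerP_prod_X_add_C, lowerP_prod_X_add_C,
    ← Finset.prod_range_succ_comm (fun j : ℕ => linF (b + j)),
    Finset.prod_range_succ' (fun j : ℕ => linF (b + j))]
  push_cast
  simp only [add_zero, add_assoc, mul_comm]

theorem Arrow.exists_factorization {f g : PS} (hf : One1 f) (h : Arrow f g) :
    ∃ (k : ℕ) (a b : ℕ → ℂ) (γ : PS), One1 γ ∧ (∀ i < k, IsNonnegInt (a i - b i)) ∧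
      γ * f = ∏ i ∈ Finset.range k, linF (a i) ∧ γ * g = ∏ i ∈ Finset.range k, linF (b i) := by
  obtain ⟨P, hP, hfg⟩ := h
  obtain ⟨k, r, rfl⟩ := hP.exists_eq_prod_range_X_sub_C
  simp only [sub_eq_add_neg, ← map_neg Polynomial.C, prod_X_add_C_comp_X_add_one,
    lowerP_prod_X_add_C] at hfg
  have hf_inv : f⁻¹ * f = 1 := PowerSeries.inv_mul_cancel f (hf ▸ one_ne_zero)
  refine ⟨k, fun i => -r i + 1, fun i => -r i, (∏ i ∈ Finset.range k, linF (-r i + 1)) * f⁻¹,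
    ?_, fun i _ => ⟨1, by simp⟩, ?_, ?_⟩
  · simp [One1, linF, map_prod, constantCoeff_inv, show constantCoeff f = 1 from hf]
  · rw [mul_assoc, hf_inv, mul_one]
  · linear_combination (-f⁻¹) * hfg + (∏ i ∈ Finset.range k, linF (-r i)) * hf_inv

theorem arrow_iff_factorization_general (l1 l2 : PS) (h1 : One1 l1) :
    Arrow l1 l2 ↔
      ∃ (k : ℕ) (a b : ℕ → ℂ) (γ : PS), One1 γ ∧
        (∀ i < k, IsNonnegInt (a i - b i)) ∧
        γ * l1 = ∏ i ∈ Finset.range k, linF (a i) ∧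
        γ * l2 = ∏ i ∈ Finset.range k, linF (b i) := by
  refine ⟨fun h => h.exists_factorization h1, ?_⟩
  rintro ⟨k, a, b, γ, hγ, hab, hγl1, hγl2⟩
  have hγ0 : γ ≠ 0 := by rintro rfl; simp [One1] at hγ
  refine Arrow.of_mul_left hγ0 ?_
  rw [hγl1, hγl2]
  refine Arrow.prod fun i hi => ?_
  obtain ⟨n, hn⟩ := hab i (Finset.mem_range.1 hi)
  rw [sub_eq_iff_eq_add'.1 hn]
  exact arrow_linF_add_natCast (b i) n

/-- λ₁ → λ₂ iff after multiplying by some γ ∈ 1 + u⁻¹ℂ[[u⁻¹]] both become products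
of linear factors whose roots are dominated entrywise. -/
theorem arrow_iff_factorization (l1 l2 : PS) (h1 : One1 l1) (h2 : One1 l2) :
    Arrow l1 l2 ↔
      ∃ (k : ℕ) (a b : ℕ → ℂ) (γ : PS), One1 γ ∧
        (∀ i < k, IsNonnegInt (a i - b i)) ∧
        γ * l1 = ∏ i ∈ Finset.range k, linF (a i) ∧
        γ * l2 = ∏ i ∈ Finset.range k, linF (b i) :=
  arrow_iff_factorization_general l1 l2 h1
end
end

section
/- Let λ₁(u), λ₂(u) ∈ 1 + u⁻¹ℂ[[u⁻¹]] with λ₁(u) → λ₂(u). If γ(u) ∈ 1 + u⁻¹ℂ[[u⁻¹]] is such that both γ(u)λ₁(u) and γ(u)λ₂(u) are polynomials in u⁻¹, then one can write γ(u)λ₁(u) = (1+a₁u⁻¹)⋯(1+a_ku⁻¹) and γ(u)λ₂(u) = (1+b₁u⁻¹)⋯(1+b_ku⁻¹) with a_i − b_i ∈ ℤ_{≥0} for each i = 1,…,k. -/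
open PowerSeries Polynomial

noncomputable section

/-!
Write `γλᵢ = Qᵢ(u⁻¹)` with `Qᵢ(0) = 1` and fix `n ≥ deg Qᵢ`. Then `Rᵢ(u) = uⁿ Qᵢ(u⁻¹)` is monic,
`Qᵢ(u⁻¹) = ∏_{α ∈ roots Rᵢ} (1 - α u⁻¹)`, and `λ₁ → λ₂` via `P` becomes `R₁(u) P(u) = R₂(u) P(u + 1)`.
Comparing roots gives `A + M = B + (M - 1)` for the root multisets `A`, `B`, `M` of `R₁`, `R₂`, `P`.
Such an identity matches `A` with `B` so that each element of `B` exceeds its partner by a natural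
number: an `α ∈ A` either lies in `B`, or is `c - 1` for some `c ∈ M`; in the second case moving `c`
from `M` to `A` in place of `α` gives a smaller instance, and the partner of `c` serves `α`.
Negating the roots gives the `aᵢ` and `bᵢ`.
-/

namespace Multiset

variable {R : Type*} [AddCommGroupWithOne R]

theorem rel_of_add_eq_add_map_sub_one {A B M : Multiset R} (h : A + M = B + M.map (· - 1)) :
    Rel (fun a b : R => ∃ n : ℕ, b = a + n) A B := by
  rcases empty_or_exists_mem A with rfl | ⟨α, hα⟩
  · have : card B = 0 := by simpa using congrArg card h
    simp_all
  have hα' : α ∈ B + M.map (· - 1) := h ▸ mem_add.2 (Or.inl hα)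
  obtain ⟨A', rfl⟩ := exists_cons_of_mem hα
  rcases mem_add.1 hα' with hB | hM
  · obtain ⟨B', rfl⟩ := exists_cons_of_mem hB
    have h' : A' + M = B' + M.map (· - 1) := by simpa [cons_add] using h
    exact Rel.cons ⟨0, by simp⟩ (rel_of_add_eq_add_map_sub_one h')
  · obtain ⟨c, hc, rfl⟩ := mem_map.1 hM
    obtain ⟨M', rfl⟩ := exists_cons_of_mem hc
    have h' : (c ::ₘ A') + M' = B + M'.map (· - 1) := by
      rw [cons_add, add_cons, map_cons, add_cons] at h
      rw [cons_add]
      exact (cons_inj_right _).1 h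
    obtain ⟨b, B', ⟨n, rfl⟩, hAB, rfl⟩ := rel_cons_left.1 (rel_of_add_eq_add_map_sub_one h')
    exact Rel.cons ⟨n + 1, by push_cast; abel⟩ hAB
termination_by card A + card M

theorem Rel.exists_eq_map_range {α β : Type*} [Nonempty α] [Nonempty β] {r : α → β → Prop}
    {s : Multiset α} {t : Multiset β} (h : Rel r s t) : ∃ (k : ℕ) (a : ℕ → α) (b : ℕ → β),
      (∀ i < k, r (a i) (b i)) ∧ s = (range k).map a ∧ t = (range k).map b := by
  induction h with
  | zero => exact ⟨0, fun _ => Classical.arbitrary _, fun _ => Classical.arbitrary _, by simp⟩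
  | @cons x y s t hxy _ ih =>
    obtain ⟨k, a, b, hab, rfl, rfl⟩ := ih
    refine ⟨k + 1, Function.update a k x, Function.update b k y, fun i hi => ?_, ?_, ?_⟩
    · rcases (Nat.lt_succ_iff_lt_or_eq.1 hi) with hi | rfl
      · simpa [hi.ne] using hab i hi
      · simpa using hxy
    all_goals
      rw [range_succ, map_cons, Function.update_self]
      congr 1
      exact map_congr rfl fun i hi => (Function.update_of_ne (mem_range.1 hi).ne _ _).symm

end Multiset

namespace Polynomial

section Semiring

variable {R : Type*} [Semiring R]

theorem reflect_mul_reflect {f g : R[X]} {m n : ℕ} (hf : f.natDegree ≤ m)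
    (hg : g.natDegree ≤ n) :
    reflect (m + n) (f * reflect n g) = reflect m f * g := by
  rw [reflect_mul f _ hf (natDegree_reflect_le.trans (max_le le_rfl hg)), reflect_reflect]

theorem monic_reflect_of_coeff_zero_eq_one {p : R[X]} {n : ℕ} (hp : p.natDegree ≤ n)
    (h0 : p.coeff 0 = 1) : (p.reflect n).Monic :=
  monic_of_natDegree_le_of_coeff_eq_one n (natDegree_reflect_le.trans (max_le le_rfl hp))
    (by rwa [coeff_reflect, revAt_le le_rfl, Nat.sub_self])

@[simp]
theorem reverse_one : (1 : R[X]).reverse = 1 := by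
  simpa using reverse_C (1 : R)

@[simp]
theorem reverse_X : (X : R[X]).reverse = 1 := by
  rw [← mul_one X, reverse_X_mul, reverse_one]

end Semiring

theorem reverse_X_sub_C {R : Type*} [Ring R] [Nontrivial R] (a : R) :
    (X - C a).reverse = 1 - C a * X := by
  rw [sub_eq_add_neg, ← C_neg, reverse_add_C]
  simp [sub_eq_add_neg]

section Domain

variable {R : Type*} [CommRing R] [IsDomain R]

theorem roots_comp_X_add_C (p : R[X]) (b : R) :
    (p.comp (X + C b)).roots = p.roots.map (· - b) := by
  simpa using roots_comp_C_mul_X_add_C p 1 b isUnit_one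

theorem reverse_multiset_prod (s : Multiset R[X]) : s.prod.reverse = (s.map reverse).prod := by
  induction s using Multiset.induction_on with
  | empty => rw [Multiset.prod_zero, Multiset.map_zero, Multiset.prod_zero, reverse_one]
  | cons p s ih => rw [Multiset.prod_cons, reverse_mul_of_domain, ih, Multiset.map_cons,
      Multiset.prod_cons]

theorem rel_roots_reflect_of_mul_reverse_eq_mul_reverse_comp {Q₁ Q₂ P : R[X]} {n : ℕ}
    (hP : P.Monic) (h₁ : Q₁.natDegree ≤ n) (h₂ : Q₂.natDegree ≤ n) (h₁0 : Q₁.coeff 0 = 1)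
    (h₂0 : Q₂.coeff 0 = 1) (h : Q₁ * P.reverse = Q₂ * (P.comp (X + 1)).reverse) :
    (Q₁.reflect n).roots.Rel (fun a b : R => ∃ m : ℕ, b = a + m) (Q₂.reflect n).roots := by
  set P' := P.comp (X + 1)
  have hP' : P'.Monic := by simpa using hP.comp_X_add_C 1
  have hdeg : P'.natDegree = P.natDegree := by
    rw [natDegree_comp, ← C_1, natDegree_X_add_C, mul_one]
  have hmul : Q₁.reflect n * P = Q₂.reflect n * P' := by
    have := congrArg (reflect (n + P.natDegree)) h
    rwa [reverse, reverse, hdeg, reflect_mul_reflect h₁ le_rfl,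
      reflect_mul_reflect h₂ hdeg.le] at this
  have hroots : (Q₁.reflect n).roots + P.roots = (Q₂.reflect n).roots + P.roots.map (· - 1) := by
    rw [← roots_mul ((monic_reflect_of_coeff_zero_eq_one h₁ h₁0).mul hP).ne_zero, hmul,
      roots_mul ((monic_reflect_of_coeff_zero_eq_one h₂ h₂0).mul hP').ne_zero]
    simpa using roots_comp_X_add_C P 1
  exact Multiset.rel_of_add_eq_add_map_sub_one hroots

end Domain

theorem eq_prod_one_sub_C_mul_X_roots_reflect {K : Type*} [Field K] [IsAlgClosed K]
    {p : K[X]} {n : ℕ} (hp : p.natDegree ≤ n) (h0 : p.coeff 0 = 1) :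
    p = ((p.reflect n).roots.map fun a => 1 - C a * X).prod := by
  have hmonic := monic_reflect_of_coeff_zero_eq_one hp h0
  have hdeg : (p.reflect n).natDegree = n :=
    le_antisymm (natDegree_reflect_le.trans (max_le le_rfl hp))
      (le_natDegree_of_ne_zero (by simp [coeff_reflect, h0]))
  have hrev : p = (p.reflect n).reverse := by rw [reverse, hdeg, reflect_reflect]
  conv_lhs => rw [hrev, (IsAlgClosed.splits _).eq_prod_roots_of_monic hmonic,
    reverse_multiset_prod, Multiset.map_map]
  simp only [Function.comp_def, reverse_X_sub_C]

end Polynomial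

theorem coe_eq_prod_linF_neg_roots_reflect {Q : ℂ[X]} {n : ℕ} (hQ : Q.natDegree ≤ n)
    (h0 : Q.coeff 0 = 1) : (Q : PS) = (((Q.reflect n).roots.map Neg.neg).map linF).prod := by
  conv_lhs => rw [eq_prod_one_sub_C_mul_X_roots_reflect hQ h0]
  rw [← Polynomial.coeToPowerSeries.ringHom_apply, map_multiset_prod, Multiset.map_map,
    Multiset.map_map]
  congr 1
  refine Multiset.map_congr rfl fun a _ => ?_
  simp [linF, sub_eq_add_neg]

/-- If λ₁ → λ₂ and γ·λ₁, γ·λ₂ are polynomials in u⁻¹ then their factorizations can be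
matched so that corresponding roots dominate. -/
theorem arrow_poly_factorization (l1 l2 γ : PS) (h1 : One1 l1) (h2 : One1 l2)
    (hγ : One1 γ) (harr : Arrow l1 l2)
    (hp1 : IsPolyPS (γ * l1)) (hp2 : IsPolyPS (γ * l2)) :
    ∃ (k : ℕ) (a b : ℕ → ℂ),
      (∀ i < k, IsNonnegInt (a i - b i)) ∧
      γ * l1 = ∏ i ∈ Finset.range k, linF (a i) ∧
      γ * l2 = ∏ i ∈ Finset.range k, linF (b i) := by
  obtain ⟨P, hP, hPl⟩ := harr
  obtain ⟨Q₁, hQ₁⟩ := hp1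
  obtain ⟨Q₂, hQ₂⟩ := hp2
  have hQ₁0 : Q₁.coeff 0 = 1 := by rw [← constantCoeff_coe, hQ₁, map_mul, hγ, h1, mul_one]
  have hQ₂0 : Q₂.coeff 0 = 1 := by rw [← constantCoeff_coe, hQ₂, map_mul, hγ, h2, mul_one]
  have hQ : Q₁ * P.reverse = Q₂ * (P.comp (Polynomial.X + 1)).reverse := by
    apply Polynomial.coe_injective
    push_cast
    rw [hQ₁, hQ₂, mul_assoc, mul_assoc]
    exact congrArg (γ * ·) hPl
  obtain ⟨n, hn₁, hn₂⟩ : ∃ n, Q₁.natDegree ≤ n ∧ Q₂.natDegree ≤ n :=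
    ⟨_, le_max_left _ _, le_max_right _ _⟩
  have hrel := rel_roots_reflect_of_mul_reverse_eq_mul_reverse_comp hP hn₁ hn₂ hQ₁0 hQ₂0 hQ
  have hneg : ((Q₁.reflect n).roots.map Neg.neg).Rel (fun a b => IsNonnegInt (a - b))
      ((Q₂.reflect n).roots.map Neg.neg) :=
    Multiset.rel_map.2 (hrel.mono fun α _ β _ ⟨m, hm⟩ => ⟨m, by rw [hm]; ring⟩)
  obtain ⟨k, a, b, hab, ha, hb⟩ := hneg.exists_eq_map_range
  refine ⟨k, a, b, hab, ?_, ?_⟩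
  · rw [← hQ₁, coe_eq_prod_linF_neg_roots_reflect hn₁ hQ₁0, ha, Multiset.map_map,
      Finset.prod_eq_multiset_prod, Finset.range_val, Function.comp_def]
  · rw [← hQ₂, coe_eq_prod_linF_neg_roots_reflect hn₂ hQ₂0, hb, Multiset.map_map,
      Finset.prod_eq_multiset_prod, Finset.range_val, Function.comp_def]
end
end

section
/- Let λ₁(u),…,λ_m(u) ∈ 1 + u⁻¹ℂ[[u⁻¹]]. If λ₁(u) → λ₂(u) → ⋯ → λ_m(u), then there exists γ(u) ∈ 1 + u⁻¹ℂ[[u⁻¹]] such that γ(u)λ_i(u) is a polynomial in u⁻¹ for every i = 1,…,m. -/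
open PowerSeries Polynomial

noncomputable section

lemma One1.mul {f g : PS} (hf : One1 f) (hg : One1 g) : One1 (f * g) := by
  rw [One1, map_mul, hf, hg, one_mul]

lemma One1.inv {f : PS} (hf : One1 f) : One1 f⁻¹ := by
  rw [One1, PowerSeries.constantCoeff_inv, hf, inv_one]

lemma one1_lowerP {P : ℂ[X]} (hP : P.Monic) : One1 (lowerP P) := by
  rw [One1, lowerP, ← PowerSeries.coeff_zero_eq_constantCoeff_apply, Polynomial.coeff_coe,
    Polynomial.coeff_zero_reverse, hP.leadingCoeff]

lemma IsPolyPS.mul_coe {f : PS} (hf : IsPolyPS f) (Q : ℂ[X]) : IsPolyPS (f * Q) := by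
  obtain ⟨R, rfl⟩ := hf
  exact ⟨R * Q, Polynomial.coe_mul R Q⟩

lemma One1.exists_one1_mul_isPolyPS {f : PS} (hf : One1 f) :
    ∃ γ : PS, One1 γ ∧ IsPolyPS (γ * f) :=
  ⟨f⁻¹, hf.inv, 1, by rw [Polynomial.coe_one, PowerSeries.inv_mul_cancel _ (by rw [hf]; simp)]⟩

/-- The witness is `γ · lowerP P`: multiplying `f` by `lowerP P` turns it into `g` times the
polynomial `lowerP (P(u+1))`. -/
lemma Arrow.exists_one1_mul_isPolyPS {f g γ : PS} (hfg : Arrow f g) (hγ : One1 γ)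
    (hγg : IsPolyPS (γ * g)) :
    ∃ δ : PS, One1 δ ∧ IsPolyPS (δ * f) ∧ ∀ h : PS, IsPolyPS (γ * h) → IsPolyPS (δ * h) := by
  obtain ⟨P, hPm, hP⟩ := hfg
  refine ⟨γ * lowerP P, hγ.mul (one1_lowerP hPm), ?_, fun h hh => ?_⟩
  · have hδf : γ * lowerP P * f = γ * g * lowerP (P.comp (Polynomial.X + 1)) := by
      rw [mul_assoc, mul_comm (lowerP P), hP, mul_assoc]
    rw [hδf]
    exact hγg.mul_coe _
  · rw [mul_right_comm]
    exact hh.mul_coe _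

/-- A chain λ₁ → λ₂ → ⋯ → λ_m admits a common γ making all γ·λ_i polynomials in u⁻¹. -/
theorem chain_common_gamma (m : ℕ) (l : ℕ → PS)
    (hone : ∀ i < m, One1 (l i))
    (hchain : ∀ i, i + 1 < m → Arrow (l i) (l (i + 1))) :
    ∃ γ : PS, One1 γ ∧ ∀ i < m, IsPolyPS (γ * l i) := by
  induction m generalizing l with
  | zero => exact ⟨1, map_one _, fun i hi => absurd hi (Nat.not_lt_zero i)⟩
  | succ m ih =>
    rcases Nat.eq_zero_or_pos m with rfl | hm
    · obtain ⟨γ, hγ, hγl⟩ := (hone 0 Nat.zero_lt_one).exists_one1_mul_isPolyPS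
      refine ⟨γ, hγ, fun i hi => ?_⟩
      obtain rfl : i = 0 := by omega
      exact hγl
    · obtain ⟨γ, hγ, hγl⟩ := ih (fun i => l (i + 1))
        (fun i hi => hone (i + 1) (by omega)) (fun i hi => hchain (i + 1) (by omega))
      obtain ⟨δ, hδ, hδl₀, hδγ⟩ :=
        (hchain 0 (by omega)).exists_one1_mul_isPolyPS hγ (hγl 0 hm)
      refine ⟨δ, hδ, fun i hi => ?_⟩
      cases i with
      | zero => exact hδl₀
      | succ j => exact hδγ _ (hγl j (by omega))
end
end

section
/- Let μ(u) ∈ 1 + u⁻¹ℂ[[u⁻¹]] with μ(−u) ⇒ μ(u). If γ(u) ∈ 1 + u⁻²ℂ[[u⁻²]] is such that γ(u)μ(u) is a polynomial in u⁻¹, then one can write γ(u)μ(u) = (1−a₁u⁻¹)(1−a₂u⁻¹)⋯(1−a_{2k}u⁻¹) with a_{2i−1} + a_{2i} ∈ ℤ_{≥0} for each i = 1,…,k. -/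
open PowerSeries Polynomial

noncomputable section

/-!
Write `γμ = ∏_{a ∈ S} (1 - a u⁻¹)` and let `R` be the multiset of roots of `P`. The symmetry
`P(u) = P(1 - u)` turns `P(u + 1)` into `P(-u)`, so, `γ` being even, `μ(-u) ⇒ μ(u)` reads
`∏_{-S + R} (1 - a u⁻¹) = ∏_{S + (-R)} (1 - a u⁻¹)`, i.e. `-S + R = S + (-R)` as multisets.
Moreover `R` is invariant under `z ↦ 1 - z`, and `1/2` has even multiplicity in `R`.

These three conditions force the pairing, by induction on `R`. If `R = ∅` then `S = -S` pairs off
as `{x, -x}`. Otherwise take `b ∈ R` with `b + 1 ∉ R`: then `-b ∉ R`, so `b ∈ S`, and `1 - b` lies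
in `R` besides `b` (for `b = 1/2` by parity). Deleting `b` and `1 - b` from `R` and lowering `b` to
`b - 1` in `S` preserves the three conditions, and raising `b - 1` back to `b` in the pairing
obtained by induction raises the sum of its pair by `1`.
-/

namespace DArrowEvenGamma

open Multiset

theorem reverse_reverse_of_coeff_zero_ne_zero {R : Type*} [Semiring R] {P : R[X]}
    (h : P.coeff 0 ≠ 0) : P.reverse.reverse = P := by
  have h0 : P.natTrailingDegree = 0 := natTrailingDegree_eq_zero.mpr (Or.inr h)
  rw [reverse, reverse_natDegree, h0, Nat.sub_zero, reverse, reflect_reflect]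

section Polynomial

variable {R : Type*} [CommRing R]

def linProdPoly (s : Multiset R) : R[X] :=
  (s.map fun a => 1 - Polynomial.C a * Polynomial.X).prod

theorem reflect_card_prod_X_sub_C [Nontrivial R] (s : Multiset R) :
    reflect (card s) (s.map fun a => Polynomial.X - Polynomial.C a).prod = linProdPoly s := by
  induction s using Multiset.induction with
  | empty => simp [linProdPoly]
  | cons a s ih =>
    rw [map_cons, prod_cons, card_cons, add_comm,
      reflect_mul _ _ (natDegree_X_sub_C_le a) (natDegree_multiset_prod_X_sub_C_eq_card s).le, ih,
      reflect_sub, reflect_one_X, reflect_C, pow_one, linProdPoly, linProdPoly, map_cons,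
      prod_cons]

variable [IsDomain R]

theorem reverse_eq_linProdPoly_roots {P : R[X]} (hP : P.Splits) (hm : P.Monic) :
    P.reverse = linProdPoly P.roots := by
  rw [← reflect_card_prod_X_sub_C, ← hP.eq_prod_roots_of_monic hm, reverse,
    hP.natDegree_eq_card_roots]

theorem linProdPoly_inj {s t : Multiset R} (h : linProdPoly s = linProdPoly t)
    (hst : card s = card t) : s = t := by
  have := congrArg (reflect (card s)) h
  rw [← reflect_card_prod_X_sub_C, hst, ← reflect_card_prod_X_sub_C, reflect_reflect,
    reflect_reflect] at this
  simpa using congrArg roots this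

end Polynomial

section Field

variable {K : Type*} [Field K]

theorem eq_linProdPoly_roots_reverse [IsAlgClosed K] {Q : K[X]} (h : Q.coeff 0 = 1) :
    Q = linProdPoly Q.reverse.roots := by
  have hm : Q.reverse.Monic := by
    rw [Monic, reverse_leadingCoeff, trailingCoeff_eq_coeff_zero (by simp [h]), h]
  rw [← reverse_eq_linProdPoly_roots (IsAlgClosed.splits _) hm,
    reverse_reverse_of_coeff_zero_ne_zero (by simp [h])]

theorem roots_comp_one_sub_X (p : K[X]) :
    (p.comp (1 - Polynomial.X)).roots = p.roots.map (1 - ·) := by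
  rw [show (1 - Polynomial.X : K[X]) = Polynomial.C (-1) * Polynomial.X + Polynomial.C 1 by
    simp; ring, roots_comp_C_mul_X_add_C _ _ _ isUnit_one.neg]
  congr 1
  ext x
  rw [Ring.inverse_eq_inv', inv_neg, inv_one]
  ring

theorem even_rootMultiplicity_half [CharZero K] {P : K[X]} (hP : P ≠ 0)
    (hsym : P.comp (1 - Polynomial.X) = P) : Even (P.rootMultiplicity 2⁻¹) := by
  obtain ⟨Q, hPQ, hQ⟩ := P.exists_eq_pow_rootMultiplicity_mul_and_not_dvd hP 2⁻¹
  set m := P.rootMultiplicity 2⁻¹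
  have hflip :
      (1 - Polynomial.X - Polynomial.C 2⁻¹ : K[X]) = -(Polynomial.X - Polynomial.C 2⁻¹) := by
    rw [neg_sub, show (1 : K[X]) = Polynomial.C (2⁻¹ + 2⁻¹) by norm_num, Polynomial.C_add]
    ring
  have hQsym : Q = (-1) ^ m * Q.comp (1 - Polynomial.X) := by
    apply mul_left_cancel₀ (pow_ne_zero m (X_sub_C_ne_zero (2⁻¹ : K)))
    conv_lhs => rw [← hPQ, ← hsym, hPQ]
    rw [mul_comp, pow_comp, sub_comp, X_comp, C_comp, hflip, neg_pow]
    ring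
  have hQ2 : Q.eval 2⁻¹ ≠ 0 := fun h => hQ (dvd_iff_isRoot.mpr h)
  have : (-1 : K) ^ m = 1 := by
    have := congrArg (eval 2⁻¹) hQsym
    rw [eval_mul, eval_pow, eval_neg, eval_one, eval_comp, eval_sub, eval_one, eval_X,
      show (1 : K) - 2⁻¹ = 2⁻¹ by norm_num] at this
    exact (mul_eq_right₀ hQ2).mp this.symm
  exact (neg_one_pow_eq_one_iff_even (by norm_num)).mp this

end Field

def linProd (s : Multiset ℂ) : PS :=
  (s.map fun a => linF (-a)).prod

theorem linProd_add (s t : Multiset ℂ) : linProd (s + t) = linProd s * linProd t := by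
  simp only [linProd, Multiset.map_add, prod_add]

theorem linProd_add_replicate_zero (s : Multiset ℂ) (j : ℕ) :
    linProd (s + replicate j 0) = linProd s := by
  simp [linProd, linF]

theorem coe_linProdPoly (s : Multiset ℂ) : (linProdPoly s : PS) = linProd s := by
  rw [linProdPoly, ← coeToPowerSeries.ringHom_apply, map_multiset_prod, Multiset.map_map, linProd]
  refine congrArg _ (map_congr rfl fun a _ => ?_)
  simp [linF, sub_eq_add_neg]

theorem linProd_inj {s t : Multiset ℂ} (h : linProd s = linProd t) (hst : card s = card t) :
    s = t :=
  linProdPoly_inj (Polynomial.coe_inj.mp (by rwa [coe_linProdPoly, coe_linProdPoly])) hst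

theorem rescale_C {R : Type*} [CommSemiring R] (a c : R) :
    rescale a (PowerSeries.C c) = PowerSeries.C c := by
  ext n
  rw [coeff_rescale, PowerSeries.coeff_C]
  split_ifs with h <;> simp [h]

theorem negU_linProd (s : Multiset ℂ) : negU (linProd s) = linProd (s.map Neg.neg) := by
  rw [negU, linProd, map_multiset_prod, Multiset.map_map, linProd, Multiset.map_map]
  refine congrArg _ (map_congr rfl fun a _ => ?_)
  simp [linF, rescale_X, rescale_C]

theorem negU_mul (f g : PS) : negU (f * g) = negU f * negU g :=
  map_mul _ f g

theorem negU_eq_self {γ : PS} (hγ : EvenOne γ) : negU γ = γ := by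
  ext n
  rw [negU, coeff_rescale]
  rcases Nat.even_or_odd n with he | ho
  · rw [he.neg_one_pow, one_mul]
  · rw [hγ.2 n ho, mul_zero]

theorem lowerP_eq_linProd_roots {P : ℂ[X]} (hm : P.Monic) : lowerP P = linProd P.roots := by
  rw [lowerP, reverse_eq_linProdPoly_roots (IsAlgClosed.splits P) hm, coe_linProdPoly]

theorem lowerP_comp_X_add_one {P : ℂ[X]} (hm : P.Monic) (hsym : P.comp (1 - Polynomial.X) = P) :
    lowerP (P.comp (Polynomial.X + 1)) = linProd (P.roots.map Neg.neg) := by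
  have hm' : (P.comp (Polynomial.X + 1)).Monic := by simpa using hm.comp_X_add_C 1
  have hflip : P.comp (Polynomial.X + 1) = P.comp (-Polynomial.X) := by
    conv_lhs => rw [← hsym, comp_assoc]
    simp
  rw [lowerP_eq_linProd_roots hm', hflip, roots_comp_neg_X]

theorem IsNonnegInt.add_natCast {z : ℂ} (hz : IsNonnegInt z) (m : ℕ) : IsNonnegInt (z + m) := by
  obtain ⟨n, rfl⟩ := hz
  exact ⟨n + m, by push_cast; rfl⟩

/-- Padding by zeros is harmless: a zero contributes the factor `1 - 0 · u⁻¹ = 1`. -/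
def Paired (S : Multiset ℂ) : Prop :=
  ∃ (k : ℕ) (a : ℕ → ℂ) (j : ℕ), (∀ i < k, IsNonnegInt (a (2 * i) + a (2 * i + 1))) ∧
    S + replicate j 0 = (range (2 * k)).map a

theorem Paired.replicate_zero (n : ℕ) : Paired (replicate n 0) := by
  refine ⟨(n + 1) / 2, fun _ => 0, 2 * ((n + 1) / 2) - n, fun _ _ => ⟨0, by simp⟩, ?_⟩
  rw [map_const', card_range, ← replicate_add]
  congr 1
  omega

theorem Paired.cons_cons {x y : ℂ} (hxy : IsNonnegInt (x + y)) {S : Multiset ℂ}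
    (hS : Paired S) : Paired (x ::ₘ y ::ₘ S) := by
  obtain ⟨k, a, j, ha, hS⟩ := hS
  refine ⟨k + 1, fun | 0 => x | 1 => y | i + 2 => a i, j, ?_, ?_⟩
  · rintro (_ | i) hi
    · exact hxy
    · exact ha i (by omega)
  · rw [show 2 * (k + 1) = 2 + 2 * k by ring, range_add, map_add, map_map, cons_add, cons_add, hS]
    simp only [range_succ, range_zero, map_cons, map_zero, Function.comp_def, add_comm 2,
      cons_add, zero_add]
    exact cons_swap _ _ _

theorem Paired.of_cons_sub_one {b : ℂ} {S : Multiset ℂ} (hS : Paired ((b - 1) ::ₘ S)) :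
    Paired (b ::ₘ S) := by
  obtain ⟨k, a, j, ha, hS⟩ := hS
  obtain ⟨i₀, hi₀, hai₀⟩ : ∃ i₀ ∈ range (2 * k), a i₀ = b - 1 :=
    mem_map.mp (hS ▸ mem_add.mpr (Or.inl (mem_cons_self _ _)))
  refine ⟨k, fun i => a i + ((if i = i₀ then 1 else 0 : ℕ) : ℂ), j, fun i hi => ?_, ?_⟩
  · convert IsNonnegInt.add_natCast (ha i hi)
      ((if 2 * i = i₀ then 1 else 0) + (if 2 * i + 1 = i₀ then 1 else 0)) using 1
    push_cast
    ring
  · have hrest : ((range (2 * k)).erase i₀).map a = S + replicate j 0 := by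
      rw [← cons_inj_right (a i₀), ← map_cons, cons_erase hi₀, ← hS, hai₀, cons_add]
    rw [← cons_erase hi₀, map_cons, cons_add, ← hrest, if_pos rfl, hai₀]
    congr 1
    · push_cast; ring
    · refine map_congr rfl fun i hi => ?_
      rw [if_neg ((nodup_range _).mem_erase_iff.mp hi).1, Nat.cast_zero, add_zero]

theorem paired_of_map_neg_eq {S : Multiset ℂ} (hS : S.map Neg.neg = S) : Paired S := by
  induction S using strongInductionOn with
  | ih S ih =>
    by_cases hzero : ∀ x ∈ S, x = 0
    · rw [eq_replicate_card.mpr hzero]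
      exact Paired.replicate_zero _
    push Not at hzero
    obtain ⟨x, hx, hx0⟩ := hzero
    obtain ⟨T, rfl⟩ := exists_cons_of_mem hx
    have hnx : -x ∈ T := by
      have : -x ∈ x ::ₘ T := hS ▸ mem_map_of_mem _ hx
      exact (mem_cons.mp this).resolve_left (neg_ne_self.mpr hx0)
    obtain ⟨T, rfl⟩ := exists_cons_of_mem hnx
    have hT : T.map Neg.neg = T := by
      simpa only [map_cons, neg_neg, cons_swap (-x), cons_inj_right] using hS
    exact (ih T ((lt_cons_self _ _).trans (lt_cons_self _ _)) hT).cons_cons ⟨0, by simp⟩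

theorem exists_mem_add_one_notMem {R : Multiset ℂ} (hR : R ≠ 0) : ∃ b ∈ R, b + 1 ∉ R := by
  classical
  obtain ⟨b, hb, hmax⟩ := R.toFinset.exists_max_image Complex.re (toFinset_nonempty.mpr hR)
  refine ⟨b, mem_toFinset.mp hb, fun hb1 => ?_⟩
  have := hmax (b + 1) (mem_toFinset.mpr hb1)
  simp only [Complex.add_re, Complex.one_re] at this
  linarith

theorem one_sub_mem_erase {R : Multiset ℂ} (hR : R.map (1 - ·) = R) (hhalf : Even (R.count 2⁻¹))
    {b : ℂ} (hb : b ∈ R) : 1 - b ∈ R.erase b := by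
  by_cases hb2 : 1 - b = b
  · obtain rfl : b = 2⁻¹ := by linear_combination -hb2 / 2
    have : 2 ≤ R.count 2⁻¹ := by
      obtain ⟨m, hm⟩ := hhalf
      have := count_pos.mpr hb
      omega
    rw [hb2, ← count_pos, count_erase_self]
    omega
  · exact (mem_erase_of_ne hb2).mpr (hR ▸ mem_map_of_mem _ hb)

theorem paired_of_map_neg_add_eq {S R : Multiset ℂ} (hSR : S.map Neg.neg + R = S + R.map Neg.neg)
    (hR : R.map (1 - ·) = R) (hhalf : Even (R.count 2⁻¹)) : Paired S := by
  induction R using strongInductionOn generalizing S with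
  | ih R ih =>
    rcases eq_or_ne R 0 with rfl | hR0
    · exact paired_of_map_neg_eq (by simpa using hSR)
    obtain ⟨b, hbR, hb1⟩ := exists_mem_add_one_notMem hR0
    have hbS : b ∈ S := by
      have hnb : -b ∉ R := fun h => hb1 <| by
        rw [← hR, add_comm, ← sub_neg_eq_add]
        exact mem_map_of_mem (1 - ·) h
      have : b ∈ S + R.map Neg.neg := hSR ▸ mem_add.mpr (Or.inr hbR)
      exact (mem_add.mp this).resolve_right (by simpa [neg_eq_iff_eq_neg] using hnb)
    obtain ⟨R₂, hR₂⟩ := exists_cons_of_mem (one_sub_mem_erase hR hhalf hbR)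
    rw [← cons_erase hbR, hR₂] at hSR hR hhalf
    obtain ⟨S₀, rfl⟩ := exists_cons_of_mem hbS
    refine Paired.of_cons_sub_one (ih R₂ ?lt ?neg ?sym ?half)
    case lt =>
      rw [← cons_erase hbR, hR₂]
      exact (lt_cons_self _ _).trans (lt_cons_self _ _)
    case neg =>
      simp only [map_cons, cons_add, add_cons, neg_sub] at hSR ⊢
      rwa [cons_swap (1 - b) (-b), cons_swap b (-b), cons_swap (b - 1) b, cons_inj_right,
        cons_inj_right] at hSR
    case sym => simpa [cons_swap (1 - b)] using hR
    case half =>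
      by_cases hb2 : b = 2⁻¹
      · subst hb2
        simpa [show (1 : ℂ) - 2⁻¹ = 2⁻¹ by norm_num, Nat.even_add_one] using hhalf
      · have : 1 - b ≠ 2⁻¹ := fun h => hb2 (by linear_combination -h)
        simpa [count_cons, Ne.symm hb2, Ne.symm this] using hhalf

end DArrowEvenGamma

open DArrowEvenGamma Multiset in
/-- If μ(−u) ⇒ μ(u) and γ is even with γ·μ a polynomial in u⁻¹, then γ·μ factors as
(1−a₁u⁻¹)⋯(1−a_{2k}u⁻¹) with a_{2i−1} + a_{2i} ∈ ℤ_{≥0}. -/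
theorem darrow_any_even_gamma (μ γ : PS) (hμ : One1 μ)
    (hd : DArrow (negU μ) μ) (hγ : EvenOne γ) (hp : IsPolyPS (γ * μ)) :
    ∃ (k : ℕ) (a : ℕ → ℂ),
      (∀ i < k, IsNonnegInt (a (2*i) + a (2*i+1))) ∧
      γ * μ = ∏ i ∈ Finset.range (2*k), linF (-(a i)) := by
  obtain ⟨Q, hQ⟩ := hp
  obtain ⟨P, hPm, -, hPsym, hPμ⟩ := hd
  have hQ1 : Q.coeff 0 = 1 := by
    rw [← constantCoeff_coe, hQ, map_mul, hγ.1, hμ, mul_one]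
  set S := Q.reverse.roots
  set R := P.roots
  have hS : γ * μ = linProd S := by
    rw [← hQ, ← coe_linProdPoly, ← eq_linProdPoly_roots_reverse hQ1]
  have hSR : S.map Neg.neg + R = S + R.map Neg.neg := by
    refine linProd_inj ?_ (by simp [add_comm])
    calc linProd (S.map Neg.neg + R) = γ * (negU μ * lowerP P) := by
          rw [linProd_add, ← negU_linProd, ← hS, negU_mul, negU_eq_self hγ,
            lowerP_eq_linProd_roots hPm, mul_assoc]
      _ = linProd (S + R.map Neg.neg) := by
          rw [hPμ, lowerP_comp_X_add_one hPm hPsym, ← mul_assoc, hS, linProd_add]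
  have hR : R.map (1 - ·) = R := by rw [← roots_comp_one_sub_X, hPsym]
  have hhalf : Even (R.count 2⁻¹) := by
    rw [count_roots]
    exact even_rootMultiplicity_half hPm.ne_zero hPsym
  obtain ⟨k, a, j, ha, hpad⟩ := paired_of_map_neg_add_eq hSR hR hhalf
  refine ⟨k, a, ha, ?_⟩
  rw [hS, ← linProd_add_replicate_zero S j, hpad, linProd, map_map, Finset.prod_eq_multiset_prod]
  rfl
end
end

section
/- Let (a₁,…,a_{2k+1}) be a list of complex numbers satisfying the ♯′-condition and a_{2i−1} + a_{2i} ∈ ℤ_{≥0} for i = 1,…,k. Let (b₁,…,b_{2k+1}) be any re-indexing (permutation) of the same list with b_{2i−1} + b_{2i} ∈ ℤ_{≥0} for i = 1,…,k. Then b_{2k+1} ≤ a_{2k+1}, i.e. a_{2k+1} − b_{2k+1} ∈ ℤ_{≥0}. In particular, the ♯′-special element is the unique maximal (in the partial order a ≥ b iff a−b ∈ ℤ_{≥0}) value of the last entry over all such pairings, and hence is unique. -/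
open PowerSeries Polynomial

noncomputable section

/-- The ♯′-condition on the list `a 0, …, a (2k)` (0-indexed): for each `i < k`,
whenever `{a p + a q : 2i ≤ p < q ≤ 2k} ∩ ℤ_{≥0}` is non-empty, `a (2i) + a (2i+1)`
is its minimal element for the order `x ≥ y ↔ x - y ∈ ℤ_{≥0}`. -/
def SharpCond (k : ℕ) (a : ℕ → ℂ) : Prop :=
  ∀ i < k,
    (∃ p q, 2*i ≤ p ∧ p < q ∧ q ≤ 2*k ∧ IsNonnegInt (a p + a q)) →
      IsNonnegInt (a (2*i) + a (2*i+1)) ∧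
      ∀ p q, 2*i ≤ p → p < q → q ≤ 2*k → IsNonnegInt (a p + a q) →
        IsNonnegInt (a p + a q - (a (2*i) + a (2*i+1)))

/-- `b` is a re-indexing (permutation) of the first `m` entries of `a`. -/
def PermOf (m : ℕ) (b a : ℕ → ℂ) : Prop :=
  ∃ σ : Equiv.Perm (Fin m), ∀ i : Fin m, b i = a (σ i)

/-- `x` is a ♯′-special element of the list `a 0, …, a (2k)`. -/
def IsSharpSpecial' (k : ℕ) (a : ℕ → ℂ) (x : ℂ) : Prop :=
  ∃ b : ℕ → ℂ, PermOf (2*k+1) b a ∧ SharpCond k b ∧ b (2*k) = x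

/-! Forget the order of the pairs of `b`: what remains is a pairing of the entries into `k`
pairs with sums in `ℤ_{≥0}` and a leftover `b (2k)`. Since `a 0 + a 1` is minimal among the
sums in `ℤ_{≥0}` of two entries, `a 0` and `a 1` can be removed from any such pairing without
decreasing the leftover: if one of them is the leftover, its partner becomes the new one; if
they lie in different pairs `{a 0, w}` and `{a 1, z}`, these are replaced by `{w, z}`, and
`w + z = (a 1 + z) + ((a 0 + w) - (a 0 + a 1))` is again in `ℤ_{≥0}`. By the ♯′-condition
the pairs of `a` can be stripped off one after the other this way, leaving `a (2k)`. -/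

lemma IsNonnegInt.add {x y : ℂ} (hx : IsNonnegInt x) (hy : IsNonnegInt y) :
    IsNonnegInt (x + y) := by
  obtain ⟨m, rfl⟩ := hx
  obtain ⟨n, rfl⟩ := hy
  exact ⟨m + n, by push_cast; rfl⟩

section Pairing

variable {ι : Type*} (a : ι → ℂ)

def pairElems (P : Multiset (ι × ι)) : Multiset ι := P.bind fun p => {p.1, p.2}

def pairSums (P : Multiset (ι × ι)) : Multiset ℂ := P.map fun p => a p.1 + a p.2

@[simp]
lemma pairElems_cons (p : ι × ι) (P : Multiset (ι × ι)) :
    pairElems (p ::ₘ P) = p.1 ::ₘ p.2 ::ₘ pairElems P := by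
  simp only [pairElems, Multiset.cons_bind, Multiset.insert_eq_cons, Multiset.cons_add,
    Multiset.singleton_add]

@[simp]
lemma pairSums_cons (p : ι × ι) (P : Multiset (ι × ι)) :
    pairSums a (p ::ₘ P) = (a p.1 + a p.2) ::ₘ pairSums a P :=
  Multiset.map_cons _ _ _

/-- A re-indexing with pair sums in `ℤ_{≥0}`, up to the order of the pairs and within them:
`l` is the last entry. -/
def IsPairing (M : Multiset ι) (P : Multiset (ι × ι)) (l : ι) : Prop :=
  l ::ₘ pairElems P = M ∧ ∀ s ∈ pairSums a P, IsNonnegInt s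

lemma exists_partner_of_mem_pairElems {P : Multiset (ι × ι)} {x : ι} (hx : x ∈ pairElems P) :
    ∃ w Q, pairElems P = x ::ₘ w ::ₘ pairElems Q ∧
      pairSums a P = (a x + a w) ::ₘ pairSums a Q := by
  obtain ⟨p, hp, hxp⟩ := Multiset.mem_bind.1 hx
  obtain ⟨Q, rfl⟩ := Multiset.exists_cons_of_mem hp
  obtain ⟨y, z⟩ := p
  rcases Multiset.mem_cons.1 hxp with rfl | hxz
  · exact ⟨z, Q, by simp, by simp⟩
  · rw [Multiset.mem_singleton.1 hxz]
    exact ⟨y, Q, by simp [Multiset.cons_swap], by simp [add_comm]⟩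

lemma exists_isPairing_of_pairElems_eq_cons {P : Multiset (ι × ι)} {x : ι} {M : Multiset ι}
    (h : pairElems P = x ::ₘ M) (hP : ∀ s ∈ pairSums a P, IsNonnegInt s) :
    ∃ Q w, IsPairing a M Q w ∧ a x + a w ∈ pairSums a P := by
  obtain ⟨w, Q, hQ, hsums⟩ :=
    exists_partner_of_mem_pairElems a (h ▸ Multiset.mem_cons_self x M)
  rw [hsums, Multiset.forall_mem_cons] at hP
  rw [hQ, Multiset.cons_inj_right] at h
  exact ⟨Q, w, ⟨h, hP.2⟩, hsums ▸ Multiset.mem_cons_self _ _⟩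

lemma exists_pairs_of_pairElems_eq_cons_cons {P : Multiset (ι × ι)} {i j : ι} {M : Multiset ι}
    (h : pairElems P = i ::ₘ j ::ₘ M) (hP : ∀ s ∈ pairSums a P, IsNonnegInt s)
    (hmin : ∀ s ∈ pairSums a P, IsNonnegInt (s - (a i + a j))) :
    ∃ Q, pairElems Q = M ∧ ∀ s ∈ pairSums a Q, IsNonnegInt s := by
  obtain ⟨w, Q₁, hQ₁, hsums₁⟩ :=
    exists_partner_of_mem_pairElems a (h ▸ Multiset.mem_cons_self i _)
  rw [hsums₁, Multiset.forall_mem_cons] at hP hmin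
  rw [hQ₁, Multiset.cons_inj_right] at h
  by_cases hwj : w = j
  · subst hwj
    exact ⟨Q₁, (Multiset.cons_inj_right w).1 h, hP.2⟩
  have hj : j ∈ pairElems Q₁ := by
    have : j ∈ w ::ₘ pairElems Q₁ := h ▸ Multiset.mem_cons_self j M
    simpa [Ne.symm hwj] using this
  obtain ⟨z, Q₂, hQ₂, hsums₂⟩ := exists_partner_of_mem_pairElems a hj
  rw [hsums₂, Multiset.forall_mem_cons] at hP hmin
  rw [hQ₂, Multiset.cons_swap, Multiset.cons_inj_right] at h
  refine ⟨(w, z) ::ₘ Q₂, by simpa using h, ?_⟩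
  rw [pairSums_cons, Multiset.forall_mem_cons]
  refine ⟨?_, hP.2.2⟩
  have hwz := hP.2.1.add hmin.1
  rwa [show a j + a z + (a i + a w - (a i + a j)) = a w + a z by ring] at hwz

lemma IsPairing.exchange {M : Multiset ι} {P : Multiset (ι × ι)} {i j l : ι}
    (h : IsPairing a (i ::ₘ j ::ₘ M) P l)
    (hmin : ∀ s ∈ pairSums a P, IsNonnegInt (s - (a i + a j))) :
    ∃ Q l', IsPairing a M Q l' ∧ IsNonnegInt (a l' - a l) := by
  obtain ⟨hM, hP⟩ := h
  by_cases hil : i = l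
  · subst hil
    obtain ⟨Q, w, hQ, hw⟩ :=
      exists_isPairing_of_pairElems_eq_cons a ((Multiset.cons_inj_right i).1 hM) hP
    refine ⟨Q, w, hQ, ?_⟩
    have := hmin _ hw
    rwa [add_comm (a i), add_sub_add_left_eq_sub] at this
  by_cases hjl : j = l
  · subst hjl
    rw [Multiset.cons_swap i, Multiset.cons_inj_right] at hM
    obtain ⟨Q, w, hQ, hw⟩ := exists_isPairing_of_pairElems_eq_cons a hM hP
    refine ⟨Q, w, hQ, ?_⟩
    have := hmin _ hw
    rwa [add_sub_add_left_eq_sub] at this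
  have hl : l ∈ M := by
    have := hM ▸ Multiset.mem_cons_self l (pairElems P)
    simpa [Ne.symm hil, Ne.symm hjl] using this
  obtain ⟨M', rfl⟩ := Multiset.exists_cons_of_mem hl
  rw [Multiset.cons_swap j, Multiset.cons_swap i, Multiset.cons_inj_right] at hM
  obtain ⟨Q, hQ, hQsums⟩ := exists_pairs_of_pairElems_eq_cons_cons a hM hP hmin
  exact ⟨Q, l, ⟨by rw [hQ], hQsums⟩, ⟨0, by simp⟩⟩

lemma IsPairing.pair_le {M : Multiset ι} {P : Multiset (ι × ι)} {l : ι} (h : IsPairing a M P l)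
    {p : ι × ι} (hp : p ∈ P) : p.1 ::ₘ {p.2} ≤ M := by
  obtain ⟨Q, rfl⟩ := Multiset.exists_cons_of_mem hp
  rw [← h.1, pairElems_cons]
  exact (Multiset.cons_le_cons _ (Multiset.cons_le_cons _ (Multiset.zero_le _))).trans
    (Multiset.le_cons_self _ _)

lemma IsPairing.leftover_eq_of_singleton {x l : ι} {P : Multiset (ι × ι)}
    (h : IsPairing a {x} P l) : l = x :=
  ((Multiset.singleton_eq_cons_iff _).1 h.1.symm).1.symm

lemma pairElems_map_range (f : ℕ → ι) (k : ℕ) :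
    pairElems ((Multiset.range k).map fun j => (f (2*j), f (2*j+1))) =
      (Multiset.range (2*k)).map f := by
  induction k with
  | zero => simp [pairElems]
  | succ k ih =>
    rw [Multiset.range_succ, Multiset.map_cons, pairElems_cons, ih,
      show 2 * (k + 1) = 2 * k + 1 + 1 by ring, Multiset.range_succ, Multiset.range_succ,
      Multiset.map_cons, Multiset.map_cons, Multiset.cons_swap]

lemma isPairing_map_range (f : ℕ → ι) (k : ℕ)
    (hf : ∀ j < k, IsNonnegInt (a (f (2*j)) + a (f (2*j+1)))) :
    IsPairing a ((Multiset.range (2*k+1)).map f)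
      ((Multiset.range k).map fun j => (f (2*j), f (2*j+1))) (f (2*k)) :=
  ⟨by rw [pairElems_map_range, Multiset.range_succ, Multiset.map_cons],
    by simpa [pairSums] using hf⟩

end Pairing

lemma Multiset.Ico_eq_cons_Ico_add_one {a b : ℕ} (h : a < b) :
    Multiset.Ico a b = a ::ₘ Multiset.Ico (a + 1) b := by
  rw [← Multiset.Ioo_cons_left h, Multiset.Ioo, Multiset.Ico, Finset.Ico_add_one_left_eq_Ioo]

lemma Multiset.Ico_zero_eq_range (n : ℕ) : Multiset.Ico 0 n = Multiset.range n := by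
  rw [Multiset.Ico, Nat.Ico_zero_eq_range, Finset.range_val]

lemma SharpCond.isNonnegInt_sub_of_ne {k : ℕ} {a : ℕ → ℂ} (hcond : SharpCond k a)
    {i x y : ℕ} (hi : i < k) (hxy : x ≠ y) (hx : 2*i ≤ x) (hy : 2*i ≤ y) (hxk : x ≤ 2*k)
    (hyk : y ≤ 2*k)
    (hsum : IsNonnegInt (a x + a y)) :
    IsNonnegInt (a x + a y - (a (2*i) + a (2*i+1))) := by
  rcases hxy.lt_or_gt with hlt | hlt
  · exact (hcond i hi ⟨x, y, hx, hlt, hyk, hsum⟩).2 x y hx hlt hyk hsum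
  · rw [add_comm] at hsum ⊢
    exact (hcond i hi ⟨y, x, hy, hlt, hxk, hsum⟩).2 y x hy hlt hxk hsum

lemma SharpCond.isNonnegInt_pairSums_sub {k : ℕ} {a : ℕ → ℂ} (hcond : SharpCond k a)
    {i : ℕ} (hi : i < k) {P : Multiset (ℕ × ℕ)} {l : ℕ}
    (h : IsPairing a (Multiset.Ico (2*i) (2*k+1)) P l) :
    ∀ s ∈ pairSums a P, IsNonnegInt (s - (a (2*i) + a (2*i+1))) := by
  intro s hs
  obtain ⟨p, hp, rfl⟩ := Multiset.mem_map.1 hs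
  have hle := h.pair_le a hp
  have hne : p.1 ≠ p.2 := by simpa using Multiset.nodup_of_le hle Multiset.nodup_Ico
  have h₁ := Multiset.mem_Ico.1 (Multiset.mem_of_le hle (by simp : p.1 ∈ p.1 ::ₘ {p.2}))
  have h₂ := Multiset.mem_Ico.1 (Multiset.mem_of_le hle (by simp : p.2 ∈ p.1 ::ₘ {p.2}))
  exact hcond.isNonnegInt_sub_of_ne hi hne h₁.1 h₂.1 (by omega) (by omega) (h.2 _ hs)

lemma SharpCond.isNonnegInt_sub_of_isPairing {k : ℕ} {a : ℕ → ℂ} (hcond : SharpCond k a)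
    {i : ℕ} (hi : i ≤ k) {P : Multiset (ℕ × ℕ)} {l : ℕ}
    (h : IsPairing a (Multiset.Ico (2*i) (2*k+1)) P l) :
    IsNonnegInt (a (2*k) - a l) := by
  induction hi using Nat.decreasingInduction generalizing P l with
  | self =>
    rw [Multiset.Ico_eq_cons_Ico_add_one (by omega), Multiset.Ico_self] at h
    rw [h.leftover_eq_of_singleton]
    exact ⟨0, by simp⟩
  | of_succ i hik ih =>
    have hmin := hcond.isNonnegInt_pairSums_sub hik h
    rw [Multiset.Ico_eq_cons_Ico_add_one (by omega), Multiset.Ico_eq_cons_Ico_add_one (by omega)]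
      at h
    obtain ⟨Q, l', hQ, hl'⟩ := h.exchange a hmin
    have hQl' := ih (by rwa [show 2 * (i + 1) = 2 * i + 1 + 1 by ring])
    rw [← sub_add_sub_cancel _ (a l')]
    exact hQl'.add hl'

lemma PermOf.exists_isPairing {k : ℕ} {a b : ℕ → ℂ} (hperm : PermOf (2*k+1) b a)
    (hpb : ∀ i < k, IsNonnegInt (b (2*i) + b (2*i+1))) :
    ∃ P l, IsPairing a (Multiset.range (2*k+1)) P l ∧ a l = b (2*k) := by
  obtain ⟨σ, hσ⟩ := hperm
  set τ : ℕ → ℕ := fun n => if h : n < 2*k+1 then σ ⟨n, h⟩ else n with hτ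
  have hab : ∀ n < 2*k+1, a (τ n) = b n := fun n hn => by
    simp only [hτ, dif_pos hn]
    exact (hσ ⟨n, hn⟩).symm
  have hrange : (Multiset.range (2*k+1)).map τ = Multiset.range (2*k+1) := by
    rw [← Multiset.coe_range, ← List.map_coe_finRange_eq_range, Multiset.map_coe, List.map_map]
    have : τ ∘ Fin.val = Fin.val ∘ σ :=
      funext fun i => by simp only [hτ, Function.comp_apply, dif_pos i.isLt]
    rw [this, ← List.map_map, Multiset.coe_eq_coe]
    exact (Equiv.Perm.map_finRange_perm σ).map _
  refine ⟨_, _, hrange ▸ isPairing_map_range a τ k ?_, hab _ (by omega)⟩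
  intro j hj
  rw [hab _ (by omega), hab _ (by omega)]
  exact hpb j hj

theorem sharp_special_maximal_general (k : ℕ) (a b : ℕ → ℂ)
    (hcond : SharpCond k a)
    (hperm : PermOf (2*k+1) b a)
    (hpb : ∀ i < k, IsNonnegInt (b (2*i) + b (2*i+1))) :
    IsNonnegInt (a (2*k) - b (2*k)) := by
  obtain ⟨P, l, hP, hl⟩ := hperm.exists_isPairing hpb
  rw [← hl]
  exact hcond.isNonnegInt_sub_of_isPairing (Nat.zero_le k)
    (by rwa [Nat.mul_zero, Multiset.Ico_zero_eq_range])

/-- Maximality of the ♯′-special element: for any re-indexing b with nonnegative pair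
sums, the last entry of b is ≤ that of the ♯′-indexing. -/
theorem sharp_special_maximal (k : ℕ) (a b : ℕ → ℂ)
    (hcond : SharpCond k a)
    (hpa : ∀ i < k, IsNonnegInt (a (2*i) + a (2*i+1)))
    (hperm : PermOf (2*k+1) b a)
    (hpb : ∀ i < k, IsNonnegInt (b (2*i) + b (2*i+1))) :
    IsNonnegInt (a (2*k) - b (2*k)) :=
  sharp_special_maximal_general k a b hcond hperm hpb
end
end
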